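/- arXiv:2111.10631 — 7 statements merged into one kernel-verified Lean document; each statement's English description precedes it below -/
import Mathlib

section
/- In the free group F generated by a and b, with r = a^{2k+1} b^2, λ = (a^k b)^{2k+1} a^{2k+1} (a^k b)^{2k+1}, and μ = (a^k b)^{-1}, the following identity holds: μ λ μ^{-1} λ^{-1} = (μ^{-2k} a^k) r (μ^{-2k} a^k)^{-1} μ^{-2k-1} r^{-1} μ^{2k+1}. -/
/-!
Write `c = a ^ k * b`, so that `μ = c⁻¹` and `b = a⁻ᵏ c`. In terms of `a` and `c` both sides
freely reduce to `c ^ n * a ^ (n + 1) * c * a ^ (-n - 1) * c ^ (-n - 1)` with `n = 2k`; the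
identity therefore holds in every group, for every `n` in place of `2k`.
-/

open FreeGroup

theorem commutator_eq_conj_mul_conj_inv {G : Type*} [Group G] (a b : G) (k n : ℕ) :
    let r := a ^ (n + 1) * b ^ 2
    let lam := (a ^ k * b) ^ (n + 1) * a ^ (n + 1) * (a ^ k * b) ^ (n + 1)
    let μ := (a ^ k * b)⁻¹
    μ * lam * μ⁻¹ * lam⁻¹ =
      (μ ^ (-(n : ℤ)) * a ^ k) * r * (μ ^ (-(n : ℤ)) * a ^ k)⁻¹ *
        μ ^ (-(n : ℤ) - 1) * r⁻¹ * μ ^ ((n : ℤ) + 1) := by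
  intro r lam μ
  obtain ⟨c, rfl⟩ : ∃ c, b = (a ^ k)⁻¹ * c := ⟨a ^ k * b, by group⟩
  simp only [r, lam, μ, sq]
  group

theorem free_group_commutator_identity_general (k : ℕ) :
    let a : FreeGroup (Fin 2) := FreeGroup.of 0
    let b : FreeGroup (Fin 2) := FreeGroup.of 1
    let r : FreeGroup (Fin 2) := a ^ (2 * k + 1) * b ^ 2
    let lam : FreeGroup (Fin 2) :=
      (a ^ k * b) ^ (2 * k + 1) * a ^ (2 * k + 1) * (a ^ k * b) ^ (2 * k + 1)
    let μ : FreeGroup (Fin 2) := (a ^ k * b)⁻¹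
    μ * lam * μ⁻¹ * lam⁻¹ =
      (μ ^ (-(2 * (k : ℤ))) * a ^ k) * r * (μ ^ (-(2 * (k : ℤ))) * a ^ k)⁻¹ *
        μ ^ (-(2 * (k : ℤ)) - 1) * r⁻¹ * μ ^ (2 * (k : ℤ) + 1) := by
  simpa using commutator_eq_conj_mul_conj_inv (of 0) (of 1) k (2 * k)

theorem free_group_commutator_identity (k : ℕ) (hk : 0 < k) :
    let a : FreeGroup (Fin 2) := FreeGroup.of 0
    let b : FreeGroup (Fin 2) := FreeGroup.of 1
    let r : FreeGroup (Fin 2) := a ^ (2 * k + 1) * b ^ 2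
    let lam : FreeGroup (Fin 2) :=
      (a ^ k * b) ^ (2 * k + 1) * a ^ (2 * k + 1) * (a ^ k * b) ^ (2 * k + 1)
    let μ : FreeGroup (Fin 2) := (a ^ k * b)⁻¹
    μ * lam * μ⁻¹ * lam⁻¹ =
      (μ ^ (-(2 * (k : ℤ))) * a ^ k) * r * (μ ^ (-(2 * (k : ℤ))) * a ^ k)⁻¹ *
        μ ^ (-(2 * (k : ℤ)) - 1) * r⁻¹ * μ ^ (2 * (k : ℤ) + 1) :=
  free_group_commutator_identity_general k
end

section
/- The group π with presentation ⟨x_1, ..., x_{2k+1} | r_1, ..., r_{2k}⟩, where r_i = x_i x_{i+1} x_{i+2}^{-1} x_{i+1}^{-1} with indices mod 2k+1, is isomorphic to the group G = ⟨a, b | a^{2k+1} b^2⟩, via an isomorphism φ satisfying φ(x_{2(k-s)+1}) = a^s (a^k b)^{-1} a^{-s} for 0 ≤ s ≤ k and φ(x_{2(k-s)}) = a^s (a^{k+1} b) a^{-s} for 0 ≤ s ≤ k-1. -/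
/-- The generators `x_i` (indices mod `2k+1`) of the Wirtinger presentation, as elements of the
free group on `ZMod (2k+1)`. -/
noncomputable def xF (k : ℕ) (i : ℕ) : FreeGroup (ZMod (2 * k + 1)) :=
  FreeGroup.of (i : ZMod (2 * k + 1))

/-- The Wirtinger relators `r_i = x_i x_{i+1} x_{i+2}⁻¹ x_{i+1}⁻¹` for `1 ≤ i ≤ 2k`. -/
def wirtingerRels (k : ℕ) : Set (FreeGroup (ZMod (2 * k + 1))) :=
  {w | ∃ i : ℕ, 1 ≤ i ∧ i ≤ 2 * k ∧
    w = xF k i * xF k (i + 1) * (xF k (i + 2))⁻¹ * (xF k (i + 1))⁻¹}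

/-- The relator `a^{2k+1} b^2` of the two-generator presentation of the torus knot group. -/
def torusRels (k : ℕ) : Set (FreeGroup (Fin 2)) :=
  {FreeGroup.of 0 ^ (2 * k + 1) * FreeGroup.of 1 ^ 2}

/-!
Set `v := (a^k b)⁻¹`. Since `a^{2k+1} = b^{-2}` is central, `s ↦ a^s v a^{-s}` is periodic
modulo `2k+1`, and `x_j ↦ a^{kj} v a^{-kj}` (note `k ≡ -1/2`) sends every product `x_j x_{j+1}` to
`a`, so it respects the Wirtinger relations. Conversely, these relations make `c := x_j x_{j+1}`
independent of `j`, conjugation by `c` shifts indices by `-2`, and hence `x_0 c^k x_0 = c^{k+1}`;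
this is exactly the relation `a^{2k+1} b^2 = 1` for `a ↦ c`, `b ↦ c^{-k} x_0⁻¹`. Both composites
fix generators.
-/

theorem conj_zpow_eq_of_conj_eq_add {G ι : Type*} [Group G] [AddGroup ι] {f : ι → G}
    {c : G} {d : ι} (h : ∀ j, c * f j * c⁻¹ = f (j + d)) (s : ℤ) (j : ι) :
    c ^ s * f j * (c ^ s)⁻¹ = f (j + s • d) := by
  induction s using Int.induction_on generalizing j with
  | zero => simp
  | succ s ih =>
    rw [add_zsmul, one_zsmul, ← add_assoc, ← h, ← ih, zpow_add_one]
    group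
  | pred s ih =>
    have h' (j : ι) : c⁻¹ * f j * c = f (j - d) := by
      have hd := h (j - d)
      rw [sub_add_cancel] at hd
      rw [← hd]
      group
    rw [sub_zsmul, one_zsmul, ← sub_eq_add_neg, ← add_sub_assoc, ← h', ← ih, zpow_sub_one]
    group

theorem conj_zpow_add_mul_eq_of_commute {G : Type*} [Group G] {a v : G} {n : ℤ}
    (h : Commute (a ^ n) v) (s m : ℤ) :
    a ^ (s + n * m) * v * (a ^ (s + n * m))⁻¹ = a ^ s * v * (a ^ s)⁻¹ := by
  have hm := (h.zpow_left m).eq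
  rw [zpow_add, zpow_mul]
  calc a ^ s * (a ^ n) ^ m * v * (a ^ s * (a ^ n) ^ m)⁻¹
      = a ^ s * ((a ^ n) ^ m * v) * ((a ^ n) ^ m)⁻¹ * (a ^ s)⁻¹ := by group
    _ = a ^ s * v * (a ^ s)⁻¹ := by rw [hm]; group

theorem relator_eq_one_iff {G : Type*} [Group G] (g₁ g₂ g₃ : G) :
    g₁ * g₂ * g₃⁻¹ * g₂⁻¹ = 1 ↔ g₁ * g₂ = g₂ * g₃ := by
  rw [mul_inv_eq_one, mul_inv_eq_iff_eq_mul]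

namespace TorusKnot

variable (k : ℕ)

theorem two_mul_add_one_eq_zero : (2 * k + 1 : ZMod (2 * k + 1)) = 0 := by
  exact_mod_cast ZMod.natCast_self (2 * k + 1)

noncomputable def torusA : PresentedGroup (torusRels k) := PresentedGroup.of 0

noncomputable def torusB : PresentedGroup (torusRels k) := PresentedGroup.of 1

theorem torusA_pow_mul_torusB_sq : torusA k ^ (2 * k + 1) * torusB k ^ 2 = 1 := by
  simpa [torusA, torusB, PresentedGroup.of] using
    PresentedGroup.one_of_mem (rels := torusRels k) rfl

theorem torusB_sq_inv : (torusB k ^ 2)⁻¹ = torusA k ^ (2 * k + 1) :=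
  (eq_inv_of_mul_eq_one_left (torusA_pow_mul_torusB_sq k)).symm

noncomputable def torusConj (s : ℤ) : PresentedGroup (torusRels k) :=
  torusA k ^ s * (torusA k ^ k * torusB k)⁻¹ * (torusA k ^ s)⁻¹

theorem commute_torusA_zpow :
    Commute (torusA k ^ ((2 * k + 1 : ℕ) : ℤ)) (torusA k ^ k * torusB k)⁻¹ := by
  rw [zpow_natCast]
  refine (((Commute.refl _).pow_pow _ _).mul_right ?_).inv_right
  rw [← torusB_sq_inv]
  exact ((Commute.refl _).pow_left 2).inv_left

theorem torusConj_congr {s t : ℤ} (h : (s : ZMod (2 * k + 1)) = t) :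
    torusConj k s = torusConj k t := by
  obtain ⟨m, hm⟩ := (ZMod.intCast_eq_intCast_iff_dvd_sub s t _).1 h
  rw [show t = s + ((2 * k + 1 : ℕ) : ℤ) * m by omega]
  unfold torusConj
  rw [conj_zpow_add_mul_eq_of_commute (commute_torusA_zpow k)]

theorem torusConj_add (s t : ℤ) :
    torusConj k (s + t) = torusA k ^ s * torusConj k t * (torusA k ^ s)⁻¹ := by
  simp only [torusConj, zpow_add]
  group

theorem torusConj_mul_torusConj_add (s : ℤ) : torusConj k s * torusConj k (s + k) = torusA k := by
  have hv : torusConj k 0 * torusConj k k = torusA k := by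
    calc torusConj k 0 * torusConj k k
        = (torusB k ^ 2)⁻¹ * (torusA k ^ (2 * k))⁻¹ := by
          simp only [torusConj, zpow_natCast, two_mul, pow_add]; group
      _ = torusA k := by rw [torusB_sq_inv, pow_succ]; group
  rw [← add_zero s, torusConj_add, add_assoc, zero_add, torusConj_add]
  calc torusA k ^ s * torusConj k 0 * (torusA k ^ s)⁻¹ *
        (torusA k ^ s * torusConj k k * (torusA k ^ s)⁻¹)
      = torusA k ^ s * (torusConj k 0 * torusConj k k) * (torusA k ^ s)⁻¹ := by group
    _ = torusA k := by rw [hv]; group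

theorem torusConj_succ : torusConj k (k + 1) = torusA k ^ (k + 1) * torusB k := by
  calc torusConj k (k + 1)
      = torusA k ^ (k + 1) * (torusB k)⁻¹ * (torusA k ^ (2 * k + 1))⁻¹ := by
        simp only [torusConj]; group
    _ = torusA k ^ (k + 1) * torusB k := by rw [← torusB_sq_inv, inv_inv]; group

noncomputable def torusImage (j : ZMod (2 * k + 1)) : PresentedGroup (torusRels k) :=
  torusConj k (k * j.val)

theorem torusImage_mul_succ (j : ZMod (2 * k + 1)) :
    torusImage k j * torusImage k (j + 1) = torusA k := by
  rw [torusImage, torusImage, ← torusConj_mul_torusConj_add k (k * j.val)]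
  congr 1
  apply torusConj_congr
  push_cast [ZMod.natCast_val, ZMod.cast_id]
  ring

theorem torusImage_odd (s : ℕ) (hs : s ≤ k) :
    torusImage k ((2 * (k - s) + 1 : ℕ) : ZMod (2 * k + 1)) =
      torusA k ^ s * (torusA k ^ k * torusB k)⁻¹ * (torusA k ^ s)⁻¹ := by
  rw [torusImage, torusConj_congr k (t := s)]
  · simp [torusConj]
  push_cast [ZMod.natCast_val, ZMod.cast_id, Nat.cast_sub hs]
  linear_combination (k - s : ZMod (2 * k + 1)) * two_mul_add_one_eq_zero k

theorem torusImage_even (s : ℕ) (hs : s ≤ k - 1) :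
    torusImage k ((2 * (k - s) : ℕ) : ZMod (2 * k + 1)) =
      torusA k ^ s * (torusA k ^ (k + 1) * torusB k) * (torusA k ^ s)⁻¹ := by
  rw [torusImage, torusConj_congr k (t := s + (k + 1)), torusConj_add, torusConj_succ,
    zpow_natCast]
  push_cast [ZMod.natCast_val, ZMod.cast_id, Nat.cast_sub (hs.trans (Nat.sub_le k 1))]
  linear_combination (k - s - 1 : ZMod (2 * k + 1)) * two_mul_add_one_eq_zero k

noncomputable def toTorus : PresentedGroup (wirtingerRels k) →* PresentedGroup (torusRels k) :=
  PresentedGroup.toGroup (f := torusImage k) <| by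
    rintro _ ⟨i, -, -, rfl⟩
    simp only [map_mul, map_inv, xF, FreeGroup.lift_apply_of]
    rw [relator_eq_one_iff]
    push_cast
    rw [show (i : ZMod (2 * k + 1)) + 2 = i + 1 + 1 by ring, torusImage_mul_succ,
      torusImage_mul_succ]

noncomputable def wirtingerGen (j : ZMod (2 * k + 1)) : PresentedGroup (wirtingerRels k) :=
  PresentedGroup.of j

theorem toTorus_wirtingerGen (j : ZMod (2 * k + 1)) :
    toTorus k (wirtingerGen k j) = torusImage k j :=
  PresentedGroup.toGroup.of _

theorem wirtingerGen_mul_succ_eq_mul_succ (i : ℕ) (h₁ : 1 ≤ i) (h₂ : i ≤ 2 * k) :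
    wirtingerGen k i * wirtingerGen k (i + 1) =
      wirtingerGen k (i + 1) * wirtingerGen k (i + 2) := by
  have h := PresentedGroup.one_of_mem (rels := wirtingerRels k) ⟨i, h₁, h₂, rfl⟩
  simp only [map_mul, map_inv, xF, relator_eq_one_iff] at h
  push_cast at h
  exact h

noncomputable def wirtingerC : PresentedGroup (wirtingerRels k) :=
  wirtingerGen k 1 * wirtingerGen k 2

theorem wirtingerGen_natCast_mul_succ (i : ℕ) (h₁ : 1 ≤ i) (h₂ : i ≤ 2 * k + 1) :
    wirtingerGen k i * wirtingerGen k (i + 1) = wirtingerC k := by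
  induction i, h₁ using Nat.le_induction with
  | base => norm_num [wirtingerC]
  | succ i hi ih =>
    push_cast
    rw [add_assoc, one_add_one_eq_two, ← wirtingerGen_mul_succ_eq_mul_succ k i hi (by omega),
      ih (by omega)]

theorem wirtingerGen_mul_succ (j : ZMod (2 * k + 1)) :
    wirtingerGen k j * wirtingerGen k (j + 1) = wirtingerC k := by
  have hj : (((j - 1).val + 1 : ℕ) : ZMod (2 * k + 1)) = j := by simp
  rw [← hj, wirtingerGen_natCast_mul_succ k _ (by omega) (by linarith [(j - 1).val_lt])]

theorem wirtingerC_conj (j : ZMod (2 * k + 1)) :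
    wirtingerC k * wirtingerGen k j * (wirtingerC k)⁻¹ = wirtingerGen k (j + -2) := by
  have h₁ := wirtingerGen_mul_succ k (j + -2)
  have h₂ := wirtingerGen_mul_succ k (j + -2 + 1)
  rw [show j + -2 + 1 + 1 = j by ring] at h₂
  calc wirtingerC k * wirtingerGen k j * (wirtingerC k)⁻¹
      = wirtingerGen k (j + -2) * (wirtingerGen k (j + -2 + 1) * wirtingerGen k j) *
          (wirtingerC k)⁻¹ := by rw [← h₁]; group
    _ = wirtingerGen k (j + -2) := by rw [h₂]; group

theorem wirtingerGen_zero_mul_pow_mul :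
    wirtingerGen k 0 * wirtingerC k ^ k * wirtingerGen k 0 = wirtingerC k ^ (k + 1) := by
  have h := conj_zpow_eq_of_conj_eq_add (wirtingerC_conj k) k 0
  rw [zpow_natCast, show (0 : ZMod (2 * k + 1)) + (k : ℤ) • -2 = 0 + 1 by
    rw [zsmul_eq_mul]; push_cast; linear_combination -two_mul_add_one_eq_zero k] at h
  calc wirtingerGen k 0 * wirtingerC k ^ k * wirtingerGen k 0
      = wirtingerGen k 0 * (wirtingerC k ^ k * wirtingerGen k 0 * (wirtingerC k ^ k)⁻¹) *
          wirtingerC k ^ k := by group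
    _ = wirtingerC k ^ (k + 1) := by rw [h, wirtingerGen_mul_succ, pow_succ']

theorem toTorus_wirtingerC : toTorus k (wirtingerC k) = torusA k := by
  rw [wirtingerC, map_mul, toTorus_wirtingerGen, toTorus_wirtingerGen,
    ← torusImage_mul_succ k 1, one_add_one_eq_two]

noncomputable def toWirtinger :
    PresentedGroup (torusRels k) →* PresentedGroup (wirtingerRels k) :=
  PresentedGroup.toGroup
    (f := ![wirtingerC k, (wirtingerC k ^ k)⁻¹ * (wirtingerGen k 0)⁻¹]) <| by
    rintro _ rfl
    simp only [map_mul, map_pow, FreeGroup.lift_apply_of, Matrix.cons_val_zero,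
      Matrix.cons_val_one]
    calc wirtingerC k ^ (2 * k + 1) * ((wirtingerC k ^ k)⁻¹ * (wirtingerGen k 0)⁻¹) ^ 2
        = wirtingerC k ^ (k + 1) *
            (wirtingerGen k 0 * wirtingerC k ^ k * wirtingerGen k 0)⁻¹ := by rw [sq]; group
      _ = 1 := by rw [wirtingerGen_zero_mul_pow_mul]; group

theorem toWirtinger_torusA : toWirtinger k (torusA k) = wirtingerC k :=
  PresentedGroup.toGroup.of _

theorem toWirtinger_torusB :
    toWirtinger k (torusB k) = (wirtingerC k ^ k)⁻¹ * (wirtingerGen k 0)⁻¹ :=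
  PresentedGroup.toGroup.of _

theorem toWirtinger_torusConj (s : ℤ) :
    toWirtinger k (torusConj k s) = wirtingerGen k (s • -2) := by
  rw [← zero_add (s • -2), ← conj_zpow_eq_of_conj_eq_add (wirtingerC_conj k)]
  simp only [torusConj, map_mul, map_inv, map_zpow, map_pow, toWirtinger_torusA,
    toWirtinger_torusB]
  group

theorem toWirtinger_comp_toTorus : (toWirtinger k).comp (toTorus k) = MonoidHom.id _ :=
  PresentedGroup.ext fun j => by
    change toWirtinger k (toTorus k (wirtingerGen k j)) = wirtingerGen k j
    rw [toTorus_wirtingerGen, torusImage, toWirtinger_torusConj, zsmul_eq_mul]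
    congr 1
    push_cast [ZMod.natCast_val, ZMod.cast_id]
    linear_combination -j * two_mul_add_one_eq_zero k

theorem toTorus_comp_toWirtinger : (toTorus k).comp (toWirtinger k) = MonoidHom.id _ :=
  PresentedGroup.ext fun i => by
    fin_cases i
    · exact congrArg (toTorus k) (toWirtinger_torusA k) |>.trans (toTorus_wirtingerC k)
    · change toTorus k (toWirtinger k (torusB k)) = torusB k
      rw [toWirtinger_torusB, map_mul, map_inv, map_inv, map_pow, toTorus_wirtingerC,
        toTorus_wirtingerGen, torusImage, ZMod.val_zero]
      simp only [torusConj, Nat.cast_zero, mul_zero, zpow_zero]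
      group

end TorusKnot

theorem torus_knot_group_presentation_general (k : ℕ) :
    let x : ℕ → PresentedGroup (wirtingerRels k) :=
      fun i => PresentedGroup.of ((i : ZMod (2 * k + 1)))
    let a : PresentedGroup (torusRels k) := PresentedGroup.of 0
    let b : PresentedGroup (torusRels k) := PresentedGroup.of 1
    ∃ φ : PresentedGroup (wirtingerRels k) ≃* PresentedGroup (torusRels k),
      (∀ s : ℕ, s ≤ k →
        φ (x (2 * (k - s) + 1)) = a ^ s * (a ^ k * b)⁻¹ * (a ^ s)⁻¹) ∧
      (∀ s : ℕ, s ≤ k - 1 →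
        φ (x (2 * (k - s))) = a ^ s * (a ^ (k + 1) * b) * (a ^ s)⁻¹) := by
  open TorusKnot in
  exact ⟨(toTorus k).toMulEquiv (toWirtinger k) (toWirtinger_comp_toTorus k)
      (toTorus_comp_toWirtinger k),
    fun s hs => (toTorus_wirtingerGen k _).trans (torusImage_odd k s hs),
    fun s hs => (toTorus_wirtingerGen k _).trans (torusImage_even k s hs)⟩

theorem torus_knot_group_presentation (k : ℕ) (hk : 0 < k) :
    let x : ℕ → PresentedGroup (wirtingerRels k) :=
      fun i => PresentedGroup.of ((i : ZMod (2 * k + 1)))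
    let a : PresentedGroup (torusRels k) := PresentedGroup.of 0
    let b : PresentedGroup (torusRels k) := PresentedGroup.of 1
    ∃ φ : PresentedGroup (wirtingerRels k) ≃* PresentedGroup (torusRels k),
      (∀ s : ℕ, s ≤ k →
        φ (x (2 * (k - s) + 1)) = a ^ s * (a ^ k * b)⁻¹ * (a ^ s)⁻¹) ∧
      (∀ s : ℕ, s ≤ k - 1 →
        φ (x (2 * (k - s))) = a ^ s * (a ^ (k + 1) * b) * (a ^ s)⁻¹) :=
  torus_knot_group_presentation_general k
end

section
/- In the group π = ⟨x_1, ..., x_{2k+1} | r_1, ..., r_{2k}⟩ with r_i = x_i x_{i+1} x_{i+2}^{-1} x_{i+1}^{-1} (indices mod 2k+1), the relation x_i x_{i+1} = x_{i+s} x_{i+s+1} holds for all i and s. -/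
theorem Function.Periodic.eq_apply_one_of_apply_succ {α : Type*} {f : ℕ → α} {n : ℕ}
    (hper : Function.Periodic f n) (hn : 0 < n)
    (hsucc : ∀ j, 0 < j → j < n → f j = f (j + 1)) (i : ℕ) : f i = f 1 := by
  have hchain : ∀ j, 1 ≤ j → j ≤ n → f j = f 1 := by
    refine Nat.le_induction (fun _ => rfl) fun j hj ih hjn => ?_
    rw [← hsucc j hj (by omega), ih (by omega)]
  calc f i = f (i % n + i / n * n) := by rw [Nat.mod_add_div']
    _ = f (i % n) := hper.nat_mul (i / n) (i % n)
    _ = f 1 := by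
      rcases Nat.eq_zero_or_pos (i % n) with h0 | hpos
      · rw [h0, ← hchain n hn le_rfl, ← hper 0, zero_add]
      · exact hchain _ hpos (Nat.mod_lt i hn).le

namespace Wirtinger

variable (k : ℕ)

noncomputable abbrev gen (i : ℕ) : PresentedGroup (wirtingerRels k) :=
  PresentedGroup.of (i : ZMod (2 * k + 1))

theorem gen_add_period (i : ℕ) : gen k (i + (2 * k + 1)) = gen k i := by
  rw [gen, Nat.cast_add, ZMod.natCast_self, add_zero]

theorem gen_mul_gen_succ {i : ℕ} (h1 : 1 ≤ i) (h2 : i ≤ 2 * k) :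
    gen k i * gen k (i + 1) = gen k (i + 1) * gen k (i + 2) := by
  have hrel : xF k i * xF k (i + 1) * (xF k (i + 1) * xF k (i + 2))⁻¹ ∈ wirtingerRels k :=
    ⟨i, h1, h2, by simp only [mul_inv_rev, mul_assoc]⟩
  have h := PresentedGroup.mk_eq_mk_of_mul_inv_mem hrel
  rw [map_mul, map_mul] at h
  exact h

theorem gen_mul_gen_succ_eq_gen_one_mul_gen_two (i : ℕ) :
    gen k i * gen k (i + 1) = gen k 1 * gen k 2 := by
  have hper : Function.Periodic (fun j => gen k j * gen k (j + 1)) (2 * k + 1) := fun j => by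
    simp only [add_right_comm j (2 * k + 1) 1, gen_add_period]
  exact hper.eq_apply_one_of_apply_succ (Nat.succ_pos _)
    (fun j hj hjn => gen_mul_gen_succ k hj (by omega)) i

end Wirtinger

theorem wirtinger_shift_relation_general (k : ℕ) :
    let x : ℕ → PresentedGroup (wirtingerRels k) :=
      fun i => PresentedGroup.of ((i : ZMod (2 * k + 1)))
    ∀ i s : ℕ, x i * x (i + 1) = x (i + s) * x (i + s + 1) :=
  fun i s => (Wirtinger.gen_mul_gen_succ_eq_gen_one_mul_gen_two k i).trans
    (Wirtinger.gen_mul_gen_succ_eq_gen_one_mul_gen_two k (i + s)).symm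

theorem wirtinger_shift_relation (k : ℕ) (hk : 0 < k) :
    let x : ℕ → PresentedGroup (wirtingerRels k) :=
      fun i => PresentedGroup.of ((i : ZMod (2 * k + 1)))
    ∀ i s : ℕ, x i * x (i + 1) = x (i + s) * x (i + s + 1) :=
  wirtinger_shift_relation_general k
end

section
/- Let ξ = exp(2πi/(2k+1)), let 1 ≤ θ ≤ k and 1 ≤ e ≤ k with e ≠ θ, and let G(t) = (1/2)(t^{2k+1} ξ^{kθ} − t^{k+1} − t^k + ξ^{(k+1)θ})(t^{−2k−1} + 1). Then G(ξ^e) = 2(Re(ξ^{kθ}) − Re(ξ^{ke})) = −4 sin(πk(θ+e)/(2k+1)) sin(πk(θ−e)/(2k+1)). -/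
open Complex Real

/-! Since `t = ξ ^ e` satisfies `t ^ (2k+1) = 1`, the second factor of `G t` is `2` and
`G t = ξ^(kθ) + ξ^((k+1)θ) - t^k - t^(k+1)`. On the unit circle `ξ^(k+1) = ξ^(-k)` is the
conjugate of `ξ^k`, so each pair sums to twice a real part, i.e. to `2 cos(2πk·/(2k+1))`;
the product form is then the sum-to-product formula for `cos a - cos b`. -/

lemma half_mul_zpow_neg_add_one_of_pow_eq_one {K : Type*} [Field K] [NeZero (2 : K)]
    {t : K} {n : ℕ} (ht : t ^ n = 1) (a b c d : K) :
    (1 / 2) * (t ^ n * a - c - d + b) * (t ^ (-(n : ℤ)) + 1) = a + b - c - d := by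
  have : t ^ (-(n : ℤ)) = 1 := by rw [zpow_neg, zpow_natCast, ht, inv_one]
  rw [ht, this]
  field_simp
  ring

lemma Complex.pow_add_pow_eq_two_mul_re {ζ : ℂ} (hζ : ‖ζ‖ = 1) {m n : ℕ}
    (h : ζ ^ (m + n) = 1) : ζ ^ m + ζ ^ n = 2 * (ζ ^ m).re := by
  have hnorm : ‖ζ ^ m‖ = 1 := by rw [norm_pow, hζ, one_pow]
  have hinv : ζ ^ n = (ζ ^ m)⁻¹ := eq_inv_of_mul_eq_one_right (by rw [← pow_add, h])
  rw [hinv, inv_eq_conj hnorm, add_conj]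
  push_cast
  ring

lemma Complex.re_exp_two_pi_I_div_pow (N m : ℕ) :
    (exp (2 * π * I / N) ^ m).re = Real.cos (2 * π * m / N) := by
  rw [← exp_nat_mul, ← exp_ofReal_mul_I_re]
  congr 2
  push_cast
  ring

theorem G_eval_at_root_of_unity_general (k : ℕ) (θ e : ℕ) :
    let ξ : ℂ := Complex.exp (2 * Real.pi * Complex.I / (2 * k + 1))
    let G : ℂ → ℂ := fun t =>
      (1 / 2) * (t ^ (2 * k + 1) * ξ ^ (k * θ) - t ^ (k + 1) - t ^ k + ξ ^ ((k + 1) * θ)) *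
        (t ^ (-(2 * (k : ℤ) + 1)) + 1)
    G (ξ ^ e) = 2 * (((ξ ^ (k * θ)).re : ℂ) - ((ξ ^ (k * e)).re : ℂ)) ∧
    G (ξ ^ e) = -4 * (Real.sin (Real.pi * k * (θ + e) / (2 * k + 1)) : ℂ) *
      (Real.sin (Real.pi * k * ((θ : ℝ) - e) / (2 * k + 1)) : ℂ) := by
  intro ξ G
  have hξ : ξ = exp (2 * π * I / ((2 * k + 1 : ℕ) : ℂ)) := by push_cast; rfl
  have hN : ξ ^ (2 * k + 1) = 1 := hξ ▸ (isPrimitiveRoot_exp _ (by omega)).pow_eq_one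
  have hG : G (ξ ^ e) = ξ ^ (k * θ) + ξ ^ ((k + 1) * θ) - ξ ^ (k * e) - ξ ^ ((k + 1) * e) := by
    have ht : (ξ ^ e) ^ (2 * k + 1) = 1 := by rw [← pow_mul, mul_comm, pow_mul, hN, one_pow]
    rw [← half_mul_zpow_neg_add_one_of_pow_eq_one ht]
    simp only [G, ← pow_mul, mul_comm e]
    push_cast
    ring
  have hre (n : ℕ) : ξ ^ (k * n) + ξ ^ ((k + 1) * n) = 2 * (ξ ^ (k * n)).re := by
    refine pow_add_pow_eq_two_mul_re (norm_eq_one_of_pow_eq_one hN (by omega)) ?_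
    rw [← add_mul, show k + (k + 1) = 2 * k + 1 by ring, pow_mul, hN, one_pow]
  have hfirst : G (ξ ^ e) = 2 * (((ξ ^ (k * θ)).re : ℂ) - ((ξ ^ (k * e)).re : ℂ)) := by
    rw [hG]
    linear_combination hre θ - hre e
  refine ⟨hfirst, ?_⟩
  rw [hfirst, hξ, re_exp_two_pi_I_div_pow, re_exp_two_pi_I_div_pow, ← ofReal_sub, Real.cos_sub_cos]
  push_cast
  ring_nf

theorem G_eval_at_root_of_unity (k : ℕ) (hk : 0 < k) (θ e : ℕ)
    (hθ : 1 ≤ θ) (hθk : θ ≤ k) (he : 1 ≤ e) (hek : e ≤ k) (hne : e ≠ θ) :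
    let ξ : ℂ := Complex.exp (2 * Real.pi * Complex.I / (2 * k + 1))
    let G : ℂ → ℂ := fun t =>
      (1 / 2) * (t ^ (2 * k + 1) * ξ ^ (k * θ) - t ^ (k + 1) - t ^ k + ξ ^ ((k + 1) * θ)) *
        (t ^ (-(2 * (k : ℤ) + 1)) + 1)
    G (ξ ^ e) = 2 * (((ξ ^ (k * θ)).re : ℂ) - ((ξ ^ (k * e)).re : ℂ)) ∧
    G (ξ ^ e) = -4 * (Real.sin (Real.pi * k * (θ + e) / (2 * k + 1)) : ℂ) *
      (Real.sin (Real.pi * k * ((θ : ℝ) - e) / (2 * k + 1)) : ℂ) :=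
  G_eval_at_root_of_unity_general k θ e
end

section
/- Let k ≥ 1, let 1 ≤ θ ≤ k and 1 ≤ e ≤ k with e ≠ θ, and set G(ξ^e) = −4 sin(πk(θ+e)/(2k+1)) sin(πk(θ−e)/(2k+1)). Then (−1)^{θ+1} G(ξ^e) > 0 if e < θ and θ+e is even; (−1)^{θ+1} G(ξ^e) < 0 if θ < e and θ+e is even; and (−1)^{θ+1} G(ξ^e) < 0 if θ+e is odd. -/
/-!
By the difference-of-cosines formula, `G(ξ^e) = 2 (cos (2πkθ/N) - cos (2πke/N))` with `N = 2k + 1`,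
and since `2km/N = m - m/N`, this is `2 ((-1)^θ cos (πθ/N) - (-1)^e cos (πe/N))`. Hence
`(-1)^(θ+1) G(ξ^e) = 2 ((-1)^(θ+e) cos (πe/N) - cos (πθ/N))`, and for `θ, e ≤ k` both cosines are
positive and `m ↦ cos (πm/N)` is strictly decreasing on `[0, N]`.
-/

open Real

namespace SignOfGJump

variable {k : ℕ}

lemma cos_two_pi_mul_div_eq (k m : ℕ) :
    cos (2 * π * k * m / (2 * k + 1)) = (-1) ^ m * cos (π * m / (2 * k + 1)) := by
  have harg : 2 * π * k * m / (2 * k + 1) = m * π - π * m / (2 * k + 1) := by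
    field_simp
    ring
  rw [harg, cos_nat_mul_pi_sub]

lemma neg_four_mul_sin_mul_sin_eq (k θ e : ℕ) :
    -4 * sin (π * k * (θ + e) / (2 * k + 1)) * sin (π * k * ((θ : ℝ) - e) / (2 * k + 1)) =
      2 * ((-1) ^ θ * cos (π * θ / (2 * k + 1)) - (-1) ^ e * cos (π * e / (2 * k + 1))) := by
  rw [← cos_two_pi_mul_div_eq, ← cos_two_pi_mul_div_eq, cos_sub_cos]
  ring_nf

lemma cos_pi_mul_div_pos {m : ℕ} (hm : m ≤ k) : 0 < cos (π * m / (2 * k + 1)) := by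
  apply cos_pos_of_mem_Ioo
  have hm' : (m : ℝ) ≤ k := by exact_mod_cast hm
  constructor
  · have : 0 ≤ π * m / (2 * k + 1) := by positivity
    linarith [pi_pos]
  · rw [div_lt_iff₀ (by positivity)]
    nlinarith [pi_pos]

lemma cos_pi_mul_div_lt {m n : ℕ} (hmn : m < n) (hn : n ≤ 2 * k + 1) :
    cos (π * n / (2 * k + 1)) < cos (π * m / (2 * k + 1)) := by
  have hN : (0 : ℝ) < 2 * k + 1 := by positivity
  have hn' : (n : ℝ) ≤ 2 * k + 1 := by exact_mod_cast hn
  have hmn' : (m : ℝ) < n := by exact_mod_cast hmn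
  apply cos_lt_cos_of_nonneg_of_le_pi (by positivity)
  · rw [div_le_iff₀ hN]
    nlinarith [pi_pos]
  · gcongr

end SignOfGJump

open SignOfGJump in
theorem sign_of_G_jump_general (k θ e : ℕ) (hθk : θ ≤ k) (hek : e ≤ k) :
    let G : ℝ := -4 * Real.sin (Real.pi * k * (θ + e) / (2 * k + 1)) *
      Real.sin (Real.pi * k * ((θ : ℝ) - e) / (2 * k + 1))
    (e < θ → Even (θ + e) → 0 < (-1 : ℝ) ^ (θ + 1) * G) ∧
    (θ < e → Even (θ + e) → (-1 : ℝ) ^ (θ + 1) * G < 0) ∧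
    (Odd (θ + e) → (-1 : ℝ) ^ (θ + 1) * G < 0) := by
  intro G
  have hG : (-1 : ℝ) ^ (θ + 1) * G =
      2 * ((-1) ^ (θ + e) * cos (π * e / (2 * k + 1)) - cos (π * θ / (2 * k + 1))) := by
    have hθθ : (-1 : ℝ) ^ (θ + 1) * (-1) ^ θ = -1 := by
      rw [← pow_add, Odd.neg_one_pow ⟨θ, by ring⟩]
    simp only [G, neg_four_mul_sin_mul_sin_eq, pow_add]
    linear_combination (2 * cos (π * θ / (2 * k + 1))) * hθθ
  have hcθ := cos_pi_mul_div_pos hθk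
  have hce := cos_pi_mul_div_pos hek
  refine ⟨fun hlt hev => ?_, fun hlt hev => ?_, fun hodd => ?_⟩
  · rw [hG, hev.neg_one_pow]
    linarith [cos_pi_mul_div_lt hlt (by omega : θ ≤ 2 * k + 1)]
  · rw [hG, hev.neg_one_pow]
    linarith [cos_pi_mul_div_lt hlt (by omega : e ≤ 2 * k + 1)]
  · rw [hG, hodd.neg_one_pow]
    linarith

theorem sign_of_G_jump (k θ e : ℕ) (hk : 1 ≤ k)
    (hθ : 1 ≤ θ) (hθk : θ ≤ k) (he : 1 ≤ e) (hek : e ≤ k) (hne : e ≠ θ) :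
    let G : ℝ := -4 * Real.sin (Real.pi * k * (θ + e) / (2 * k + 1)) *
      Real.sin (Real.pi * k * ((θ : ℝ) - e) / (2 * k + 1))
    (e < θ → Even (θ + e) → 0 < (-1 : ℝ) ^ (θ + 1) * G) ∧
    (θ < e → Even (θ + e) → (-1 : ℝ) ^ (θ + 1) * G < 0) ∧
    (Odd (θ + e) → (-1 : ℝ) ^ (θ + 1) * G < 0) :=
  sign_of_G_jump_general k θ e hθk hek
end

section
/- Let ξ be a primitive (2k+1)-st root of unity with k ≥ 1, θ an integer with 1 ≤ θ ≤ k, and define the 2×4 matrix M over ℂ[t^{±1}] by M = [[−ξ^{−kθ}, t^{−k−1}, −1, 1], [t^{−k}, −ξ^{kθ}, t, −1]]. Then the vectors v₁ = (t^{−k}ξ^{−kθ}, t^{−2k−1}, ξ^{−kθ}P_{2k}(t^{−1}), ξ^{−kθ}P_{2k}(t^{−1})) and v₂ = (0, t^{−1}−1, ξ^{(k+1)θ}−t^{k+1}, ξ^{−kθ}−t^{k}) satisfy v₁ · M^{#T} = 0 and v₂ · M^{#T} = 0, where # is the involution sending p(t) to the complex conjugate polynomial evaluated at t^{−1}, and are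 linearly independent over ℂ(t). -/
/-! Since `ξ` lies on the unit circle, `#` acts on `M` by `ξ ↦ ξ⁻¹`, `t ↦ t⁻¹`, and because
`ξ ^ (2k+1) = 1` the entry `ξ ^ ((k+1)θ)` of `v₂` equals `ξ ^ (-kθ)`. After this, `v₂ · M^{#T} = 0`
is a two-term cancellation, and `v₁ · M^{#T} = 0` reduces to the telescoping identity
`P_{2k}(t⁻¹) (1 - t⁻¹) = 1 - t^{-(2k+1)}`. The vectors are independent because the first
coordinate of `v₂` vanishes while that of `v₁` does not, and `v₂ ≠ 0`. -/

open LaurentPolynomial Matrix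

/-- The involution `#` on `ℂ[t,t⁻¹]` sending `p(t)` to `conj(p)(t⁻¹)`
(conjugate the coefficients and replace `t` by `t⁻¹`). -/
noncomputable def laurentHash (p : LaurentPolynomial ℂ) : LaurentPolynomial ℂ :=
  p.coeff.sum fun n a => LaurentPolynomial.C ((starRingEnd ℂ) a) * LaurentPolynomial.T (-n)

lemma laurentHash_C_mul_T (a : ℂ) (n : ℤ) :
    laurentHash (C a * T n) = C ((starRingEnd ℂ) a) * T (-n) := by
  rw [← single_eq_C_mul_T, laurentHash, AddMonoidAlgebra.coeff_single, Finsupp.sum_single_index]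
  simp

lemma laurentHash_C (a : ℂ) : laurentHash (C a) = C ((starRingEnd ℂ) a) := by
  simpa using laurentHash_C_mul_T a 0

lemma laurentHash_T (n : ℤ) : laurentHash (T n) = T (-n) := by
  simpa using laurentHash_C_mul_T 1 n

lemma laurentHash_one : laurentHash 1 = 1 := by
  simpa using laurentHash_C 1

lemma laurentHash_neg (p : LaurentPolynomial ℂ) : laurentHash (-p) = -laurentHash p := by
  rw [laurentHash, AddMonoidAlgebra.coeff_neg, Finsupp.sum_neg_index] <;> simp [laurentHash]

lemma Complex.conj_zpow_of_pow_eq_one {ζ : ℂ} {n : ℕ} (h : ζ ^ n = 1) (hn : n ≠ 0) (m : ℤ) :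
    starRingEnd ℂ (ζ ^ m) = ζ ^ (-m) := by
  rw [map_zpow₀, ← Complex.inv_eq_conj (Complex.norm_eq_one_of_pow_eq_one h hn), _root_.inv_zpow']

section Kernel

variable {R : Type*} [CommRing R]

lemma LaurentPolynomial.sum_range_T_neg_mul_one_sub (n : ℕ) :
    (∑ j ∈ Finset.range n, T (-(j : ℤ)) : R[T;T⁻¹]) * (1 - T (-1)) = 1 - T (-(n : ℤ)) := by
  induction n with
  | zero => simp
  | succ n ih =>
    rw [Finset.sum_range_succ, add_mul, ih, mul_sub, mul_one, ← T_add]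
    push_cast
    ring_nf

variable (k : ℕ) {a b : R}

lemma vecMul_first_kernel_vector (hab : a * b = 1) :
    vecMul ![C a * T (-(k : ℤ)), T (-(2 * (k : ℤ) + 1)),
        C a * ∑ j ∈ Finset.range (2 * k + 1), T (-(j : ℤ)),
        C a * ∑ j ∈ Finset.range (2 * k + 1), T (-(j : ℤ))]
      !![-C b, T k; T (k + 1), -C a; -1, T (-1); 1, -1] = 0 := by
  have hCab : (C a * C b : R[T;T⁻¹]) = 1 := by rw [← map_mul, hab, map_one]
  have hgeom := sum_range_T_neg_mul_one_sub (R := R) (2 * k + 1)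
  push_cast at hgeom
  have hT₁ : (T (-(2 * (k : ℤ) + 1)) * T (k + 1) : R[T;T⁻¹]) = T (-(k : ℤ)) := by
    rw [← T_add]; ring_nf
  have hT₂ : (T (-(k : ℤ)) * T k : R[T;T⁻¹]) = 1 := by
    rw [← T_add, neg_add_cancel, T_zero]
  funext j
  generalize (∑ j ∈ Finset.range (2 * k + 1), T (-(j : ℤ)) : R[T;T⁻¹]) = P at hgeom ⊢
  fin_cases j <;> simp only [vecMul, dotProduct, Fin.sum_univ_four, of_apply, cons_val', cons_val_zero,
    cons_val_one, cons_val_two, cons_val_three, empty_val', cons_val_fin_one, tail_cons,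
    Fin.zero_eta, Fin.mk_one, Fin.isValue, Pi.zero_apply, vecHead]
  · linear_combination -T (-(k : ℤ)) * hCab + hT₁
  · linear_combination C a * hT₂ - C a * hgeom

lemma vecMul_second_kernel_vector :
    vecMul ![0, T (-1) - 1, C a - T (k + 1), C a - T k]
      !![-C b, T k; T (k + 1), -C a; -1, T (-1); 1, -1] = 0 := by
  have hT : (T (-1) * T (k + 1) : R[T;T⁻¹]) = T k := by
    rw [← T_add]; ring_nf
  funext j
  fin_cases j <;> simp only [vecMul, dotProduct, Fin.sum_univ_four, of_apply, cons_val', cons_val_zero,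
    cons_val_one, cons_val_two, cons_val_three, empty_val', cons_val_fin_one, tail_cons,
    Fin.zero_eta, Fin.mk_one, Fin.isValue, Pi.zero_apply, vecHead]
  · linear_combination hT
  · linear_combination -hT

end Kernel

lemma LaurentPolynomial.T_injective {R : Type*} [Semiring R] [Nontrivial R] :
    Function.Injective (T : ℤ → R[T;T⁻¹]) := fun m n h => by
  simpa [degree_T] using congrArg degree h

lemma LaurentPolynomial.C_mul_T_ne_zero {R : Type*} [Semiring R] {a : R} (ha : a ≠ 0) (n : ℤ) :
    C a * T n ≠ 0 := fun h => by
  simpa [degree_C_mul_T n a ha] using congrArg degree h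

lemma linearIndependent_pair_of_apply_eq_zero {K ι : Type*} [DivisionRing K] {u w : ι → K} {i : ι}
    (hu : u i ≠ 0) (hw : w i = 0) (hw₀ : w ≠ 0) : LinearIndependent K ![u, w] := by
  refine linearIndependent_fin2.mpr ⟨hw₀, fun c hc => hu ?_⟩
  simpa [hw] using (congrFun hc i).symm

theorem kernel_of_partial3_general (k : ℕ) (θ : ℕ) :
    let ξ : ℂ := Complex.exp (2 * Real.pi * Complex.I / (2 * k + 1))
    let M : Matrix (Fin 2) (Fin 4) (LaurentPolynomial ℂ) :=
      !![LaurentPolynomial.C (-ξ ^ (-(k : ℤ) * θ)), LaurentPolynomial.T (-((k : ℤ) + 1)),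
           -1, 1;
         LaurentPolynomial.T (-(k : ℤ)), LaurentPolynomial.C (-ξ ^ ((k : ℤ) * θ)),
           LaurentPolynomial.T 1, -1]
    -- `M^{#T}` : transpose composed with the involution `#`
    let MhashT : Matrix (Fin 4) (Fin 2) (LaurentPolynomial ℂ) := fun i j => laurentHash (M j i)
    let P2kInv : LaurentPolynomial ℂ := ∑ j ∈ Finset.range (2 * k + 1), LaurentPolynomial.T (-(j : ℤ))
    let v₁ : Fin 4 → LaurentPolynomial ℂ :=
      ![LaurentPolynomial.C (ξ ^ (-(k : ℤ) * θ)) * LaurentPolynomial.T (-(k : ℤ)),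
        LaurentPolynomial.T (-(2 * (k : ℤ) + 1)),
        LaurentPolynomial.C (ξ ^ (-(k : ℤ) * θ)) * P2kInv,
        LaurentPolynomial.C (ξ ^ (-(k : ℤ) * θ)) * P2kInv]
    let v₂ : Fin 4 → LaurentPolynomial ℂ :=
      ![0,
        LaurentPolynomial.T (-1) - 1,
        LaurentPolynomial.C (ξ ^ (((k : ℤ) + 1) * θ)) - LaurentPolynomial.T ((k : ℤ) + 1),
        LaurentPolynomial.C (ξ ^ (-(k : ℤ) * θ)) - LaurentPolynomial.T (k : ℤ)]
    Matrix.vecMul v₁ MhashT = 0 ∧ Matrix.vecMul v₂ MhashT = 0 ∧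
    LinearIndependent (FractionRing (LaurentPolynomial ℂ))
      ![fun j => algebraMap (LaurentPolynomial ℂ) (FractionRing (LaurentPolynomial ℂ)) (v₁ j),
        fun j => algebraMap (LaurentPolynomial ℂ) (FractionRing (LaurentPolynomial ℂ)) (v₂ j)] := by
  intro ξ M MhashT P2kInv v₁ v₂
  have hξ : ξ ^ (2 * k + 1) = 1 := by
    simpa using (Complex.isPrimitiveRoot_exp (2 * k + 1) (by omega)).pow_eq_one
  have hξ₀ : ξ ≠ 0 := Complex.exp_ne_zero _
  have hconj := Complex.conj_zpow_of_pow_eq_one hξ (by omega)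
  set X : ℂ := ξ ^ (-(k : ℤ) * θ)
  set Y : ℂ := ξ ^ ((k : ℤ) * θ)
  have hX : X ≠ 0 := zpow_ne_zero _ hξ₀
  have hXY : X * Y = 1 := by
    rw [← zpow_add₀ hξ₀]; simp
  have hZ : ξ ^ (((k : ℤ) + 1) * θ) = X := by
    rw [show ((k : ℤ) + 1) * θ = -(k : ℤ) * θ + ((2 * k + 1 : ℕ) : ℤ) * θ by push_cast; ring,
      zpow_add₀ hξ₀, _root_.zpow_mul ξ ((2 * k + 1 : ℕ) : ℤ) θ, zpow_natCast ξ, hξ,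
      _root_.one_zpow, mul_one]
  have hMhashT : MhashT = !![-C Y, T k; T (k + 1), -C X; -1, T (-1); 1, -1] := by
    funext i j
    fin_cases i <;> fin_cases j <;>
      simp [MhashT, M, X, Y, laurentHash_C, laurentHash_T, laurentHash_one, laurentHash_neg, hconj]
  refine ⟨?_, ?_, ?_⟩
  · rw [hMhashT]; exact vecMul_first_kernel_vector k hXY
  · rw [hMhashT]; simp only [v₂, hZ]; exact vecMul_second_kernel_vector k
  · have hinj := IsFractionRing.injective (LaurentPolynomial ℂ) (FractionRing (LaurentPolynomial ℂ))
    refine linearIndependent_pair_of_apply_eq_zero (i := 0) ?_ (map_zero _) fun h => ?_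
    · exact (map_ne_zero_iff _ hinj).mpr (C_mul_T_ne_zero hX _)
    · have h₁ : T (-1) - T 0 = (0 : LaurentPolynomial ℂ) := by
        simpa [v₂, ← map_one (algebraMap _ (FractionRing _)), ← map_sub, map_eq_zero_iff _ hinj]
          using congrFun h 1
      exact absurd (T_injective (sub_eq_zero.mp h₁)) (by norm_num)

theorem kernel_of_partial3 (k : ℕ) (hk : 0 < k) (θ : ℕ) (hθ : 1 ≤ θ) (hθk : θ ≤ k) :
    let ξ : ℂ := Complex.exp (2 * Real.pi * Complex.I / (2 * k + 1))
    let M : Matrix (Fin 2) (Fin 4) (LaurentPolynomial ℂ) :=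
      !![LaurentPolynomial.C (-ξ ^ (-(k : ℤ) * θ)), LaurentPolynomial.T (-((k : ℤ) + 1)),
           -1, 1;
         LaurentPolynomial.T (-(k : ℤ)), LaurentPolynomial.C (-ξ ^ ((k : ℤ) * θ)),
           LaurentPolynomial.T 1, -1]
    -- `M^{#T}` : transpose composed with the involution `#`
    let MhashT : Matrix (Fin 4) (Fin 2) (LaurentPolynomial ℂ) := fun i j => laurentHash (M j i)
    let P2kInv : LaurentPolynomial ℂ := ∑ j ∈ Finset.range (2 * k + 1), LaurentPolynomial.T (-(j : ℤ))
    let v₁ : Fin 4 → LaurentPolynomial ℂ :=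
      ![LaurentPolynomial.C (ξ ^ (-(k : ℤ) * θ)) * LaurentPolynomial.T (-(k : ℤ)),
        LaurentPolynomial.T (-(2 * (k : ℤ) + 1)),
        LaurentPolynomial.C (ξ ^ (-(k : ℤ) * θ)) * P2kInv,
        LaurentPolynomial.C (ξ ^ (-(k : ℤ) * θ)) * P2kInv]
    let v₂ : Fin 4 → LaurentPolynomial ℂ :=
      ![0,
        LaurentPolynomial.T (-1) - 1,
        LaurentPolynomial.C (ξ ^ (((k : ℤ) + 1) * θ)) - LaurentPolynomial.T ((k : ℤ) + 1),
        LaurentPolynomial.C (ξ ^ (-(k : ℤ) * θ)) - LaurentPolynomial.T (k : ℤ)]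
    Matrix.vecMul v₁ MhashT = 0 ∧ Matrix.vecMul v₂ MhashT = 0 ∧
    LinearIndependent (FractionRing (LaurentPolynomial ℂ))
      ![fun j => algebraMap (LaurentPolynomial ℂ) (FractionRing (LaurentPolynomial ℂ)) (v₁ j),
        fun j => algebraMap (LaurentPolynomial ℂ) (FractionRing (LaurentPolynomial ℂ)) (v₂ j)] :=
  kernel_of_partial3_general k θ
end

section
/- Let ξ be a primitive (2k+1)-st root of unity, 1 ≤ θ ≤ k, and let Z be the 4×4 matrix over ℂ[t^{±1}] whose rows are Z₁ = (ξ^{−(k−1)θ}t^{k+1}/(ξ^{θ}−ξ^{−θ}), ξ^{−θ}/(ξ^{θ}−ξ^{−θ}), 0, −t^{2k+1}ξ^{θ}P_{2k}(t^{−1}ξ^{θ})/(ξ^{θ}−ξ^{−θ})), Z₂ = ((t^{−1}ξ^{θ}−1)ξ^{−kθ}t^{k+1}, t^{−1}ξ^{−θ}−1, 0, t^{2k+1}−1), Z₃ = (0, t^{−k−2}ξ^{(k−1)θ}−ξ^{kθ}t^{−k−1}, 1, −ξ^{kθ}t^{−k−1}), Z₄ = (0,0,0,1). Then det(Z) = −t^{k+1}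 ξ^{−kθ}; in particular Z₁, Z₂, Z₃, Z₄ form a basis of ℂ(t)⁴. -/
/-!
The third column of `Z` is the unit vector `e₃` and its fourth row is `e₄`, so `det Z` is the `2 × 2` minor of `Z₁, Z₂` in the first two columns. With
`q = ξ^θ`, both products in that minor carry the factor `t^{k+1} ξ^{-kθ} / (q - q⁻¹)`, their
`t⁻¹`-parts cancel, and what is left is `q⁻¹ - q`. The denominator is nonzero because
`ξ^{2θ} ≠ 1` for `0 < 2θ < 2k + 1`.
-/

open RatFunc Matrix

theorem Matrix.det_fin_four_of_block {R : Type*} [CommRing R] (a b c d e x y z : R) :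
    det (of ![![a, b, 0, x], ![c, d, 0, y], ![0, e, 1, z], ![0, 0, 0, 1]]) = a * d - b * c := by
  simp [det_succ_row_zero, Fin.sum_univ_succ, Fin.succAbove, ← sub_eq_add_neg]

theorem IsPrimitiveRoot.pow_sub_inv_ne_zero {K : Type*} [Field K] {ζ : K} {n θ : ℕ}
    (hζ : IsPrimitiveRoot ζ n) (hθ : 0 < θ) (hθn : 2 * θ < n) : ζ ^ θ - (ζ ^ θ)⁻¹ ≠ 0 := by
  have hζθ : ζ ^ θ ≠ 0 := pow_ne_zero _ (hζ.ne_zero (by omega))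
  intro h
  apply hζ.pow_ne_one_of_pos_of_lt (by omega) hθn
  rw [two_mul, pow_add]
  field_simp at h
  linear_combination h

-- The minor of `Z₁, Z₂`, with `s = t⁻¹`, `T = t^{k+1}` and `w = ξ^{-kθ}`.
theorem two_minor_eq_neg_of_sub_inv_ne_zero {K : Type*} [Field K] {q : K} (hq : q - q⁻¹ ≠ 0)
    (s T w : K) :
    q * w / (q - q⁻¹) * T * (s * q⁻¹ - 1) - q⁻¹ / (q - q⁻¹) * ((s * q - 1) * w * T) = -T * w := by
  have hq0 : q ≠ 0 := by rintro rfl; simp at hq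
  have hs : q * (s * q⁻¹ - 1) - q⁻¹ * (s * q - 1) = -(q - q⁻¹) := by
    field_simp
    ring
  calc _ = T * w / (q - q⁻¹) * (q * (s * q⁻¹ - 1) - q⁻¹ * (s * q - 1)) := by ring
    _ = -T * w := by rw [hs, mul_neg, div_mul_cancel₀ _ hq, neg_mul]

theorem det_Z_matrix_general (k : ℕ) (θ : ℕ) (hθ : 1 ≤ θ) (hθk : θ ≤ k) :
    let ξ : ℂ := Complex.exp (2 * Real.pi * Complex.I / (2 * k + 1))
    let t : RatFunc ℂ := RatFunc.X
    let Cc : ℂ → RatFunc ℂ := RatFunc.C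
    let P2k : RatFunc ℂ → RatFunc ℂ := fun u => ∑ j ∈ Finset.range (2 * k + 1), u ^ j
    let Z₁ : Fin 4 → RatFunc ℂ :=
      ![Cc (ξ ^ (-((k : ℤ) - 1) * θ) / (ξ ^ (θ : ℤ) - ξ ^ (-(θ : ℤ)))) * t ^ (k + 1),
        Cc (ξ ^ (-(θ : ℤ)) / (ξ ^ (θ : ℤ) - ξ ^ (-(θ : ℤ)))),
        0,
        -Cc (ξ ^ (θ : ℤ) / (ξ ^ (θ : ℤ) - ξ ^ (-(θ : ℤ)))) * t ^ (2 * k + 1) *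
          P2k (t⁻¹ * Cc (ξ ^ (θ : ℤ)))]
    let Z₂ : Fin 4 → RatFunc ℂ :=
      ![(t⁻¹ * Cc (ξ ^ (θ : ℤ)) - 1) * Cc (ξ ^ (-(k : ℤ) * θ)) * t ^ (k + 1),
        t⁻¹ * Cc (ξ ^ (-(θ : ℤ))) - 1,
        0,
        t ^ (2 * k + 1) - 1]
    let Z₃ : Fin 4 → RatFunc ℂ :=
      ![0,
        t ^ (-((k : ℤ) + 2)) * Cc (ξ ^ (((k : ℤ) - 1) * θ)) -
          Cc (ξ ^ ((k : ℤ) * θ)) * t ^ (-((k : ℤ) + 1)),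
        1,
        -Cc (ξ ^ ((k : ℤ) * θ)) * t ^ (-((k : ℤ) + 1))]
    let Z₄ : Fin 4 → RatFunc ℂ := ![0, 0, 0, 1]
    Matrix.det (Matrix.of ![Z₁, Z₂, Z₃, Z₄]) = -t ^ (k + 1) * Cc (ξ ^ (-(k : ℤ) * θ)) ∧
    LinearIndependent (RatFunc ℂ) ![Z₁, Z₂, Z₃, Z₄] := by
  intro ξ t Cc P2k Z₁ Z₂ Z₃ Z₄
  have hξ : IsPrimitiveRoot ξ (2 * k + 1) := by
    simpa using Complex.isPrimitiveRoot_exp (2 * k + 1) (by omega)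
  have hξ0 : ξ ≠ 0 := hξ.ne_zero (by omega)
  set q := ξ ^ (θ : ℤ)
  have hq : q - q⁻¹ ≠ 0 := by
    simpa [q, zpow_natCast] using hξ.pow_sub_inv_ne_zero hθ (by omega)
  have hqk : ξ ^ (-((k : ℤ) - 1) * θ) = q * ξ ^ (-(k : ℤ) * θ) := by
    rw [← zpow_add₀ hξ0]
    ring_nf
  have hdet : det (of ![Z₁, Z₂, Z₃, Z₄]) = -t ^ (k + 1) * Cc (ξ ^ (-(k : ℤ) * θ)) := by
    simp only [Z₁, Z₂, Z₃, Z₄, det_fin_four_of_block, hqk, zpow_neg ξ (θ : ℤ), Cc, map_div₀,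
      map_mul, map_inv₀, map_sub]
    refine two_minor_eq_neg_of_sub_inv_ne_zero ?_ _ _ _
    rw [← map_inv₀, ← map_sub]
    exact (map_ne_zero _).mpr hq
  refine ⟨hdet, linearIndependent_rows_of_det_ne_zero (A := of ![Z₁, Z₂, Z₃, Z₄]) ?_⟩
  rw [hdet]
  exact mul_ne_zero (neg_ne_zero.mpr (pow_ne_zero _ X_ne_zero))
    ((map_ne_zero _).mpr (zpow_ne_zero _ hξ0))

theorem det_Z_matrix (k : ℕ) (hk : 0 < k) (θ : ℕ) (hθ : 1 ≤ θ) (hθk : θ ≤ k) :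
    let ξ : ℂ := Complex.exp (2 * Real.pi * Complex.I / (2 * k + 1))
    let t : RatFunc ℂ := RatFunc.X
    let Cc : ℂ → RatFunc ℂ := RatFunc.C
    let P2k : RatFunc ℂ → RatFunc ℂ := fun u => ∑ j ∈ Finset.range (2 * k + 1), u ^ j
    let Z₁ : Fin 4 → RatFunc ℂ :=
      ![Cc (ξ ^ (-((k : ℤ) - 1) * θ) / (ξ ^ (θ : ℤ) - ξ ^ (-(θ : ℤ)))) * t ^ (k + 1),
        Cc (ξ ^ (-(θ : ℤ)) / (ξ ^ (θ : ℤ) - ξ ^ (-(θ : ℤ)))),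
        0,
        -Cc (ξ ^ (θ : ℤ) / (ξ ^ (θ : ℤ) - ξ ^ (-(θ : ℤ)))) * t ^ (2 * k + 1) *
          P2k (t⁻¹ * Cc (ξ ^ (θ : ℤ)))]
    let Z₂ : Fin 4 → RatFunc ℂ :=
      ![(t⁻¹ * Cc (ξ ^ (θ : ℤ)) - 1) * Cc (ξ ^ (-(k : ℤ) * θ)) * t ^ (k + 1),
        t⁻¹ * Cc (ξ ^ (-(θ : ℤ))) - 1,
        0,
        t ^ (2 * k + 1) - 1]
    let Z₃ : Fin 4 → RatFunc ℂ :=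
      ![0,
        t ^ (-((k : ℤ) + 2)) * Cc (ξ ^ (((k : ℤ) - 1) * θ)) -
          Cc (ξ ^ ((k : ℤ) * θ)) * t ^ (-((k : ℤ) + 1)),
        1,
        -Cc (ξ ^ ((k : ℤ) * θ)) * t ^ (-((k : ℤ) + 1))]
    let Z₄ : Fin 4 → RatFunc ℂ := ![0, 0, 0, 1]
    Matrix.det (Matrix.of ![Z₁, Z₂, Z₃, Z₄]) = -t ^ (k + 1) * Cc (ξ ^ (-(k : ℤ) * θ)) ∧
    LinearIndependent (RatFunc ℂ) ![Z₁, Z₂, Z₃, Z₄] :=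
  det_Z_matrix_general k θ hθ hθk
end
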